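/- Let k ≥ 2, y ∈ ℝⁿ with |y| < 1, and W the vector field from the Alexander–Osserman argument (W(x) = -(1/k)·(((1-2⟨x,y⟩+|y|²)/|x-y|²)^{k/2} - 1)·(x-y) + (1/(k-2))·(((1-2⟨x,y⟩+|y|²)/|x-y|²)^{(k-2)/2} - 1)·y for k > 2, with the logarithmic modification for k = 2). Then for every x in the open unit ball with x ≠ y and every orthonormal family e₁,…,e_k in ℝⁿ, one has the exact identity ∑_{i=1}^k ⟨D_{e_i}W(x), e_i⟩ = 1 - ((1-2⟨x,y⟩+|y|²)^{k/2}/|x-y|^{k+2})·(|x-y|² - ∑_{i=1}^k ⟨x-y, e_i⟩²) - ((1-2⟨x,y⟩+|y|²)^{(k-4)/2}/|x-y|^{k-2})·∑_{i=1}^k ⟨y, e_i⟩². -/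

import Mathlib

/-!
Write `ρ = (1 - 2⟪x, y⟫ + ‖y‖²) / ‖x - y‖²`, so that `W = f(ρ) • (x - y) + g(ρ) • y` with
`f' = -½ ρ^(k/2 - 1)` and `g' = ½ ρ^(k/2 - 2)` (for `k = 2` as well, thanks to the logarithm).
Since `Dρ(v) = -(2 / ‖x - y‖²) (ρ ⟪x - y, v⟫ + ⟪y, v⟫)`, the mixed terms `⟪x - y, v⟫ ⟪y, v⟫`
cancel in `⟪D_v W, v⟫`, leaving
`f(ρ) ‖v‖² + (ρ^(k/2 - 2) / ‖x - y‖²) (ρ² ⟪x - y, v⟫² - ⟪y, v⟫²)`.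
Summing over an orthonormal `k`-family and using `k f(ρ) = 1 - ρ^(k/2)` gives the identity.
-/

open scoped InnerProductSpace

namespace AlexanderOsserman

open Real

variable {E : Type*} [NormedAddCommGroup E] [InnerProductSpace ℝ E]

theorem inner_fderiv_comp_smul_sub_add_comp_smul {φ : E → ℝ} {φ' : E →L[ℝ] ℝ} {f g : ℝ → ℝ}
    {f' g' : ℝ} {x : E} (y : E) (hφ : HasFDerivAt φ φ' x) (hf : HasDerivAt f f' (φ x))
    (hg : HasDerivAt g g' (φ x)) (v : E) :
    ⟪fderiv ℝ (fun z => f (φ z) • (z - y) + g (φ z) • y) x v, v⟫_ℝ =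
      f (φ x) * ‖v‖ ^ 2 + φ' v * (f' * ⟪x - y, v⟫_ℝ + g' * ⟪y, v⟫_ℝ) := by
  have hW : HasFDerivAt (fun z => f (φ z) • (z - y) + g (φ z) • y) _ x :=
    ((hf.comp_hasFDerivAt x hφ).fun_smul ((hasFDerivAt_id x).sub_const y)).fun_add
      ((hg.comp_hasFDerivAt x hφ).fun_smul (hasFDerivAt_const y x))
  rw [hW.fderiv]
  simp only [Function.comp_apply, id_eq, smul_zero, zero_add, add_apply, smul_apply,
    ContinuousLinearMap.id_apply, ContinuousLinearMap.smulRight_apply, smul_eq_mul, inner_add_left,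
    real_inner_smul_left, real_inner_self_eq_norm_sq]
  ring

noncomputable def ratio (y z : E) : ℝ := (1 - 2 * ⟪z, y⟫_ℝ + ‖y‖ ^ 2) / ‖z - y‖ ^ 2

theorem hasFDerivAt_ratio {x y : E} (hxy : x ≠ y) :
    HasFDerivAt (ratio y)
      ((-2 / ‖x - y‖ ^ 2) • (ratio y x • innerSL ℝ (x - y) + innerSL ℝ y)) x := by
  have hb : ‖x - y‖ ^ 2 ≠ 0 := by simpa [sub_eq_zero] using hxy
  have hnum : HasFDerivAt (fun z : E => 1 - 2 * ⟪z, y⟫_ℝ + ‖y‖ ^ 2) (-(2 : ℝ) • innerSL ℝ y) x := by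
    have := (((innerSL ℝ y).hasFDerivAt (x := x)).const_mul (2 : ℝ)).const_sub 1
    simpa [real_inner_comm] using this.add_const (‖y‖ ^ 2)
  have hden : HasFDerivAt (fun z : E => (‖z - y‖ ^ 2)⁻¹)
      (-((‖x - y‖ ^ 2) ^ 2)⁻¹ • (2 • (innerSL ℝ (x - y)).comp (ContinuousLinearMap.id ℝ E))) x :=
    (hasDerivAt_inv hb).comp_hasFDerivAt x ((hasFDerivAt_id x).sub_const y).norm_sq
  refine (hnum.mul hden).congr_fderiv ?_
  ext v
  simp only [map_sub, ContinuousLinearMap.comp_id, neg_smul, smul_neg, add_apply, neg_apply,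
    smul_apply, sub_apply, coe_innerSL_apply, nsmul_eq_mul, Nat.cast_ofNat, smul_eq_mul, ratio,
    smul_add]
  field_simp

noncomputable def radialCoeff (k s : ℝ) : ℝ := -(1 / k) * (s ^ (k / 2) - 1)

noncomputable def axialCoeff (k s : ℝ) : ℝ :=
  if k = 2 then 1 / 2 * log s else 1 / (k - 2) * (s ^ ((k - 2) / 2) - 1)

theorem hasDerivAt_radialCoeff {k s : ℝ} (hk : k ≠ 0) (hs : s ≠ 0) :
    HasDerivAt (radialCoeff k) (-(1 / 2) * s ^ (k / 2 - 1)) s :=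
  (((hasDerivAt_rpow_const (p := k / 2) (Or.inl hs)).sub_const 1).const_mul (-(1 / k))).congr_deriv
    (by field_simp)

theorem hasDerivAt_axialCoeff (k : ℝ) {s : ℝ} (hs : s ≠ 0) :
    HasDerivAt (axialCoeff k) (1 / 2 * s ^ (k / 2 - 2)) s := by
  unfold axialCoeff
  split_ifs with hk
  · subst hk
    refine ((hasDerivAt_log hs).const_mul (1 / 2 : ℝ)).congr_deriv ?_
    norm_num [rpow_neg_one]
  · have hk' : k - 2 ≠ 0 := sub_ne_zero.2 hk
    refine (((hasDerivAt_rpow_const (p := (k - 2) / 2) (Or.inl hs)).sub_const 1).const_mul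
      (1 / (k - 2))).congr_deriv ?_
    rw [show (k - 2) / 2 - 1 = k / 2 - 2 by ring]
    field_simp

noncomputable def vectorField (k : ℝ) (y z : E) : E :=
  radialCoeff k (ratio y z) • (z - y) + axialCoeff k (ratio y z) • y

theorem inner_fderiv_vectorField_apply_self {k : ℝ} (hk : k ≠ 0) {x y : E} (hxy : x ≠ y)
    (hs : 0 < ratio y x) (v : E) :
    ⟪fderiv ℝ (vectorField k y) x v, v⟫_ℝ =
      radialCoeff k (ratio y x) * ‖v‖ ^ 2 + ratio y x ^ (k / 2) / ‖x - y‖ ^ 2 * ⟪x - y, v⟫_ℝ ^ 2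
        - ratio y x ^ (k / 2 - 2) / ‖x - y‖ ^ 2 * ⟪y, v⟫_ℝ ^ 2 := by
  have hb : ‖x - y‖ ^ 2 ≠ 0 := by simpa [sub_eq_zero] using hxy
  unfold vectorField
  rw [inner_fderiv_comp_smul_sub_add_comp_smul y (hasFDerivAt_ratio hxy)
    (hasDerivAt_radialCoeff hk hs.ne') (hasDerivAt_axialCoeff k hs.ne')]
  have h1 : ratio y x ^ (k / 2 - 1) = ratio y x ^ (k / 2 - 2) * ratio y x := by
    rw [← rpow_add_one hs.ne']; ring_nf
  have h2 : ratio y x ^ (k / 2) = ratio y x ^ (k / 2 - 2) * ratio y x ^ 2 := by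
    rw [← rpow_add_natCast hs.ne']; ring_nf
  simp only [smul_apply, add_apply, innerSL_apply_apply, smul_eq_mul, h1, h2]
  field_simp
  ring

theorem div_sq_rpow_div_sq {a t : ℝ} (ha : 0 ≤ a) (ht : 0 < t) {p q : ℝ} (hq : 2 * p + 2 = q) :
    (a / t ^ 2) ^ p / t ^ 2 = a ^ p / t ^ q := by
  rw [div_rpow ha (by positivity), div_div, ← hq, rpow_add ht, rpow_mul ht.le]
  norm_cast

end AlexanderOsserman

open AlexanderOsserman

theorem stmt_5_general (n k : ℕ) (hk : 2 ≤ k) (y : EuclideanSpace ℝ (Fin n))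
    (W : EuclideanSpace ℝ (Fin n) → EuclideanSpace ℝ (Fin n))
    (hWgt : 2 < k → ∀ x, W x =
      (-(1 / (k : ℝ)) * (((1 - 2 * ⟪x, y⟫_ℝ + ‖y‖ ^ 2) / ‖x - y‖ ^ 2) ^ ((k : ℝ) / 2) - 1)) • (x - y)
      + ((1 / ((k : ℝ) - 2)) * (((1 - 2 * ⟪x, y⟫_ℝ + ‖y‖ ^ 2) / ‖x - y‖ ^ 2) ^ (((k : ℝ) - 2) / 2) - 1)) • y)
    (hWeq : k = 2 → ∀ x, W x =
      (-(1 / 2 : ℝ) * ((1 - 2 * ⟪x, y⟫_ℝ + ‖y‖ ^ 2) / ‖x - y‖ ^ 2 - 1)) • (x - y)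
      + ((1 / 2 : ℝ) * Real.log ((1 - 2 * ⟪x, y⟫_ℝ + ‖y‖ ^ 2) / ‖x - y‖ ^ 2)) • y)
    (x : EuclideanSpace ℝ (Fin n)) (hx : ‖x‖ < 1) (hxy : x ≠ y)
    (e : Fin k → EuclideanSpace ℝ (Fin n)) (he : Orthonormal ℝ e) :
    ∑ i, ⟪fderiv ℝ W x (e i), e i⟫_ℝ =
      1 - ((1 - 2 * ⟪x, y⟫_ℝ + ‖y‖ ^ 2) ^ ((k : ℝ) / 2) / ‖x - y‖ ^ ((k : ℝ) + 2)) *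
            (‖x - y‖ ^ 2 - ∑ i, ⟪x - y, e i⟫_ℝ ^ 2)
        - ((1 - 2 * ⟪x, y⟫_ℝ + ‖y‖ ^ 2) ^ (((k : ℝ) - 4) / 2) / ‖x - y‖ ^ ((k : ℝ) - 2)) *
            ∑ i, ⟪y, e i⟫_ℝ ^ 2 := by
  have hb : 0 < ‖x - y‖ := norm_pos_iff.2 (sub_ne_zero.2 hxy)
  -- the numerator is `‖x - y‖² + (1 - ‖x‖²)`
  have ha : 0 < 1 - 2 * ⟪x, y⟫_ℝ + ‖y‖ ^ 2 := by nlinarith [norm_sub_sq_real x y, norm_nonneg x]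
  have hs : 0 < ratio y x := div_pos ha (by positivity)
  have hk0 : (k : ℝ) ≠ 0 := by positivity
  have hW : W = vectorField k y := by
    funext z
    rcases hk.lt_or_eq with hk2 | rfl
    · rw [hWgt hk2 z, vectorField, radialCoeff, axialCoeff,
        if_neg (by exact_mod_cast hk2.ne'), ratio]
    · simp [hWeq rfl z, vectorField, radialCoeff, axialCoeff, ratio]
  have hP : ratio y x ^ ((k : ℝ) / 2) / ‖x - y‖ ^ 2 =
      (1 - 2 * ⟪x, y⟫_ℝ + ‖y‖ ^ 2) ^ ((k : ℝ) / 2) / ‖x - y‖ ^ ((k : ℝ) + 2) :=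
    div_sq_rpow_div_sq ha.le hb (by ring)
  have hQ : ratio y x ^ ((k : ℝ) / 2 - 2) / ‖x - y‖ ^ 2 =
      (1 - 2 * ⟪x, y⟫_ℝ + ‖y‖ ^ 2) ^ (((k : ℝ) - 4) / 2) / ‖x - y‖ ^ ((k : ℝ) - 2) := by
    rw [show (k : ℝ) / 2 - 2 = ((k : ℝ) - 4) / 2 by ring]
    exact div_sq_rpow_div_sq ha.le hb (by ring)
  have hkf : k * radialCoeff k (ratio y x) =
      1 - ratio y x ^ ((k : ℝ) / 2) / ‖x - y‖ ^ 2 * ‖x - y‖ ^ 2 := by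
    rw [radialCoeff]
    field_simp
    ring
  simp only [hW, inner_fderiv_vectorField_apply_self hk0 hxy hs, he.1, one_pow, mul_one,
    Finset.sum_add_distrib, Finset.sum_sub_distrib, Finset.sum_const, Finset.card_univ,
    Fintype.card_fin, nsmul_eq_mul, ← Finset.mul_sum]
  rw [hkf, hP, hQ]
  ring

theorem stmt_5 (n k : ℕ) (hk : 2 ≤ k) (y : EuclideanSpace ℝ (Fin n)) (hy : ‖y‖ < 1)
    (W : EuclideanSpace ℝ (Fin n) → EuclideanSpace ℝ (Fin n))
    (hWgt : 2 < k → ∀ x, W x =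
      (-(1 / (k : ℝ)) * (((1 - 2 * ⟪x, y⟫_ℝ + ‖y‖ ^ 2) / ‖x - y‖ ^ 2) ^ ((k : ℝ) / 2) - 1)) • (x - y)
      + ((1 / ((k : ℝ) - 2)) * (((1 - 2 * ⟪x, y⟫_ℝ + ‖y‖ ^ 2) / ‖x - y‖ ^ 2) ^ (((k : ℝ) - 2) / 2) - 1)) • y)
    (hWeq : k = 2 → ∀ x, W x =
      (-(1 / 2 : ℝ) * ((1 - 2 * ⟪x, y⟫_ℝ + ‖y‖ ^ 2) / ‖x - y‖ ^ 2 - 1)) • (x - y)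
      + ((1 / 2 : ℝ) * Real.log ((1 - 2 * ⟪x, y⟫_ℝ + ‖y‖ ^ 2) / ‖x - y‖ ^ 2)) • y)
    (x : EuclideanSpace ℝ (Fin n)) (hx : ‖x‖ < 1) (hxy : x ≠ y)
    (e : Fin k → EuclideanSpace ℝ (Fin n)) (he : Orthonormal ℝ e) :
    ∑ i, ⟪fderiv ℝ W x (e i), e i⟫_ℝ =
      1 - ((1 - 2 * ⟪x, y⟫_ℝ + ‖y‖ ^ 2) ^ ((k : ℝ) / 2) / ‖x - y‖ ^ ((k : ℝ) + 2)) *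
            (‖x - y‖ ^ 2 - ∑ i, ⟪x - y, e i⟫_ℝ ^ 2)
        - ((1 - 2 * ⟪x, y⟫_ℝ + ‖y‖ ^ 2) ^ (((k : ℝ) - 4) / 2) / ‖x - y‖ ^ ((k : ℝ) - 2)) *
            ∑ i, ⟪y, e i⟫_ℝ ^ 2 :=
  stmt_5_general n k hk y W hWgt hWeq x hx hxy e he
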